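/- Let ∇ ⊂ ℝ⁴ be defined by the inequalities 0 ≤ x ≤ 1, 0 ≤ y ≤ 1, z ≥ 0, w ≥ 0, 1-z-w ≥ 0, x+y-z-w ≥ 0, 1-x-y+z ≥ 0. Then ∇ has exactly eight lattice points, and for every positive integer n the number of lattice points in n∇ equals C(n+4,4) + 3·C(n+3,4) + 2·C(n+2,4) = (6n⁴ + 32n³ + 66n² + 64n + 24)/24. -/

import Mathlib

/-
The affine involution `(a, b, c, d) ↦ (n - a, n - b, c + n - a - b, d)` maps `n∇` onto itself and
exchanges the halves `a + b ≤ n` and `a + b ≥ n`, which meet in the slice `a + b = n`. Hence the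
number of lattice points of `n∇` is twice that of the lower half minus that of the slice. On the
lower half the constraints reduce to `c + d ≤ a + b ≤ n`, so its slice `a + b = s` has
`(s + 1) * C(s + 2, 2)` points, and summing over `s ≤ n` gives a polynomial in `n` that agrees
with the stated one and with the binomial combination. The eight points of `∇` are the case
`n = 1`.
-/

open Pointwise

def nabla : Set (ℝ × ℝ × ℝ × ℝ) :=
  {p : ℝ × ℝ × ℝ × ℝ |
    0 ≤ p.1 ∧
    p.1 ≤ 1 ∧
    0 ≤ p.2.1 ∧
    p.2.1 ≤ 1 ∧
    0 ≤ p.2.2.1 ∧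
    0 ≤ p.2.2.2 ∧
    0 ≤ 1 - p.2.2.1 - p.2.2.2 ∧
    0 ≤ p.1 + p.2.1 - p.2.2.1 - p.2.2.2 ∧
    0 ≤ 1 - p.1 - p.2.1 + p.2.2.1}

open Finset

lemma mem_smul_nabla {r : ℝ} (hr : 0 < r) (x y z w : ℝ) :
    (x, y, z, w) ∈ r • nabla ↔ 0 ≤ x ∧ x ≤ r ∧ 0 ≤ y ∧ y ≤ r ∧ 0 ≤ z ∧ 0 ≤ w ∧
      z + w ≤ r ∧ z + w ≤ x + y ∧ x + y ≤ r + z := by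
  constructor
  · rintro ⟨⟨x', y', z', w'⟩, ⟨h₁, h₂, h₃, h₄, h₅, h₆, h₇, h₈, h₉⟩, hq⟩
    simp only [Prod.smul_mk, smul_eq_mul, Prod.mk.injEq] at hq
    obtain ⟨rfl, rfl, rfl, rfl⟩ := hq
    refine ⟨?_, ?_, ?_, ?_, ?_, ?_, ?_, ?_, ?_⟩ <;> nlinarith
  · rintro ⟨h₁, h₂, h₃, h₄, h₅, h₆, h₇, h₈, h₉⟩
    refine ⟨r⁻¹ • (x, y, z, w), ?_, smul_inv_smul₀ hr.ne' _⟩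
    have hr' : 0 < r⁻¹ := inv_pos.mpr hr
    have hrr : r⁻¹ * r = 1 := inv_mul_cancel₀ hr.ne'
    simp only [nabla, Set.mem_ofPred_eq, Prod.smul_mk, smul_eq_mul]
    refine ⟨?_, ?_, ?_, ?_, ?_, ?_, ?_, ?_, ?_⟩ <;> nlinarith

def nablaPoints (n : ℕ) : Finset (ℕ × ℕ × ℕ × ℕ) :=
  (range (n + 1) ×ˢ range (n + 1) ×ˢ range (n + 1) ×ˢ range (n + 1)).filter fun v =>
    v.2.2.1 + v.2.2.2 ≤ n ∧ v.2.2.1 + v.2.2.2 ≤ v.1 + v.2.1 ∧ v.1 + v.2.1 ≤ n + v.2.2.1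

lemma mem_nablaPoints {n a b c d : ℕ} :
    (a, b, c, d) ∈ nablaPoints n ↔
      a ≤ n ∧ b ≤ n ∧ c + d ≤ n ∧ c + d ≤ a + b ∧ a + b ≤ n + c := by
  simp only [nablaPoints, mem_filter, mem_product, mem_range]
  omega

lemma intPoints_smul_nabla_eq_image {n : ℕ} (hn : 0 < n) :
    {v : ℤ × ℤ × ℤ × ℤ |
        ((v.1 : ℝ), (v.2.1 : ℝ), (v.2.2.1 : ℝ), (v.2.2.2 : ℝ)) ∈ (n : ℝ) • nabla} =
      (fun u : ℕ × ℕ × ℕ × ℕ => ((u.1 : ℤ), (u.2.1 : ℤ), (u.2.2.1 : ℤ), (u.2.2.2 : ℤ))) ''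
        nablaPoints n := by
  ext ⟨a, b, c, d⟩
  simp only [Set.mem_ofPred_eq, mem_smul_nabla (Nat.cast_pos.mpr hn), Set.mem_image, mem_coe,
    Prod.exists, mem_nablaPoints, Prod.mk.injEq]
  norm_cast
  constructor
  · intro h
    exact ⟨a.toNat, b.toNat, c.toNat, d.toNat, by omega, by omega, by omega, by omega, by omega⟩
  · rintro ⟨a, b, c, d, h, rfl, rfl, rfl, rfl⟩
    omega

def pairsSumLE (m : ℕ) : Finset (ℕ × ℕ) :=
  (range (m + 1) ×ˢ range (m + 1)).filter fun q => q.1 + q.2 ≤ m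

lemma card_pairsSumLE (m : ℕ) : #(pairsSumLE m) = (m + 2).choose 2 := by
  rw [card_eq_sum_card_fiberwise (f := fun q => q.1 + q.2) (t := range (m + 1))]
  · have hfiber : ∀ t ∈ range (m + 1), {q ∈ pairsSumLE m | q.1 + q.2 = t} = antidiagonal t := by
      intro t ht
      ext ⟨c, d⟩
      simp only [pairsSumLE, mem_filter, mem_product, mem_range,
        HasAntidiagonal.mem_antidiagonal] at ht ⊢
      omega
    rw [sum_congr rfl fun t ht => by rw [hfiber t ht, Nat.card_antidiagonal],
      Nat.choose_two_right, ← sum_range_id, sum_range_succ' _ (m + 1), add_zero]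
  · rintro ⟨c, d⟩ hq
    simp only [pairsSumLE, mem_coe, mem_filter, mem_range] at hq ⊢
    omega

def nablaLower (n : ℕ) : Finset (ℕ × ℕ × ℕ × ℕ) :=
  {v ∈ nablaPoints n | v.1 + v.2.1 ≤ n}

-- On `nablaPoints n` none of these subtractions truncate.
def nablaReflect (n : ℕ) (v : ℕ × ℕ × ℕ × ℕ) : ℕ × ℕ × ℕ × ℕ :=
  (n - v.1, n - v.2.1, v.2.2.1 + n - (v.1 + v.2.1), v.2.2.2)

lemma card_nablaUpper_eq_card_nablaLower (n : ℕ) :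
    #{v ∈ nablaPoints n | n ≤ v.1 + v.2.1} = #(nablaLower n) := by
  apply card_nbij' (nablaReflect n) (nablaReflect n) <;>
  · rintro ⟨a, b, c, d⟩
    simp only [nablaLower, coe_filter, Set.mem_ofPred_eq, mem_nablaPoints, nablaReflect,
      Prod.mk.injEq, and_true]
    omega

lemma card_nablaPoints_add_card_slice (n : ℕ) :
    #(nablaPoints n) + #{v ∈ nablaLower n | v.1 + v.2.1 = n} = 2 * #(nablaLower n) := by
  have hunion : nablaLower n ∪ {v ∈ nablaPoints n | n ≤ v.1 + v.2.1} = nablaPoints n := by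
    rw [nablaLower, ← filter_or, filter_true_of_mem fun v _ => le_total _ _]
  have hinter : nablaLower n ∩ {v ∈ nablaPoints n | n ≤ v.1 + v.2.1} =
      {v ∈ nablaLower n | v.1 + v.2.1 = n} := by
    rw [nablaLower, ← filter_and, filter_filter]
    exact filter_congr fun v _ => by omega
  have := card_union_add_card_inter (nablaLower n) {v ∈ nablaPoints n | n ≤ v.1 + v.2.1}
  rw [hunion, hinter, card_nablaUpper_eq_card_nablaLower] at this
  omega

lemma card_nablaLower_slice {n s : ℕ} (hs : s ≤ n) :
    #{v ∈ nablaLower n | v.1 + v.2.1 = s} = (s + 1) * (s + 2).choose 2 := by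
  have hslice : {v ∈ nablaLower n | v.1 + v.2.1 = s} =
      (antidiagonal s ×ˢ pairsSumLE s).map (Equiv.prodAssoc ℕ ℕ (ℕ × ℕ)).toEmbedding := by
    ext ⟨a, b, c, d⟩
    simp only [nablaLower, pairsSumLE, mem_filter, mem_nablaPoints, mem_map_equiv,
      Equiv.prodAssoc_symm_apply, mem_product, HasAntidiagonal.mem_antidiagonal, mem_range]
    omega
  rw [hslice, card_map, card_product, Nat.card_antidiagonal, card_pairsSumLE]

lemma card_nablaLower (n : ℕ) :
    #(nablaLower n) = ∑ s ∈ range (n + 1), (s + 1) * (s + 2).choose 2 := by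
  rw [card_eq_sum_card_fiberwise (f := fun v => v.1 + v.2.1) (t := range (n + 1))]
  · exact sum_congr rfl fun s hs => card_nablaLower_slice (Nat.lt_succ_iff.mp (mem_range.mp hs))
  · intro v hv
    simp only [nablaLower, mem_coe, mem_filter, mem_range] at hv ⊢
    omega

lemma cast_sum_succ_mul_choose_two (n : ℕ) :
    ((∑ s ∈ range (n + 1), (s + 1) * (s + 2).choose 2 : ℕ) : ℚ) =
      (n + 1) * (n + 2) * (n + 3) * (3 * n + 4) / 24 := by
  induction n with
  | zero => norm_num
  | succ n ih =>
    rw [sum_range_succ, Nat.cast_add, ih]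
    push_cast [Nat.cast_choose_two]
    ring

lemma cast_card_nablaPoints (n : ℕ) :
    (#(nablaPoints n) : ℚ) = (6 * n ^ 4 + 32 * n ^ 3 + 66 * n ^ 2 + 64 * n + 24) / 24 := by
  have h := congrArg (Nat.cast : ℕ → ℚ) (card_nablaPoints_add_card_slice n)
  rw [card_nablaLower_slice le_rfl, card_nablaLower, Nat.cast_add, Nat.cast_mul, Nat.cast_mul,
    cast_sum_succ_mul_choose_two, Nat.cast_choose_two] at h
  push_cast at h
  linear_combination h

lemma cast_choose_four (m : ℕ) :
    (m.choose 4 : ℚ) = m * (m - 1) * (m - 2) * (m - 3) / 24 := by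
  rw [Nat.cast_choose_eq_descPochhammer_div]
  simp [descPochhammer_succ_right, Nat.factorial]

lemma cast_choose_combination (n : ℕ) :
    ((n + 4).choose 4 + 3 * (n + 3).choose 4 + 2 * (n + 2).choose 4 : ℚ) =
      (6 * n ^ 4 + 32 * n ^ 3 + 66 * n ^ 2 + 64 * n + 24) / 24 := by
  simp only [cast_choose_four]
  push_cast
  ring

lemma card_nablaPoints (n : ℕ) :
    #(nablaPoints n) = (n + 4).choose 4 + 3 * (n + 3).choose 4 + 2 * (n + 2).choose 4 := by
  exact_mod_cast (cast_card_nablaPoints n).trans (cast_choose_combination n).symm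

lemma ncard_intPoints_smul_nabla {n : ℕ} (hn : 0 < n) :
    {v : ℤ × ℤ × ℤ × ℤ |
        ((v.1 : ℝ), (v.2.1 : ℝ), (v.2.2.1 : ℝ), (v.2.2.2 : ℝ)) ∈ (n : ℝ) • nabla}.ncard =
      (n + 4).choose 4 + 3 * (n + 3).choose 4 + 2 * (n + 2).choose 4 := by
  have hinj : Function.Injective
      fun u : ℕ × ℕ × ℕ × ℕ => ((u.1 : ℤ), (u.2.1 : ℤ), (u.2.2.1 : ℤ), (u.2.2.2 : ℤ)) :=
    Nat.cast_injective.prodMap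
      (Nat.cast_injective.prodMap (Nat.cast_injective.prodMap Nat.cast_injective))
  rw [intPoints_smul_nabla_eq_image hn, Set.ncard_image_of_injective _ hinj, Set.ncard_coe_finset,
    card_nablaPoints]

theorem stmt15 :
    ({v : ℤ × ℤ × ℤ × ℤ | (((v.1 : ℝ), (v.2.1 : ℝ), (v.2.2.1 : ℝ), (v.2.2.2 : ℝ)) : ℝ × ℝ × ℝ × ℝ) ∈ nabla}.ncard = 8) ∧
      ∀ n : ℕ, 0 < n →
        {v : ℤ × ℤ × ℤ × ℤ | (((v.1 : ℝ), (v.2.1 : ℝ), (v.2.2.1 : ℝ), (v.2.2.2 : ℝ)) : ℝ × ℝ × ℝ × ℝ) ∈ (n : ℝ) • nabla}.ncard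
            = Nat.choose (n + 4) 4 + 3 * Nat.choose (n + 3) 4 + 2 * Nat.choose (n + 2) 4 ∧
          ((Nat.choose (n + 4) 4 + 3 * Nat.choose (n + 3) 4 + 2 * Nat.choose (n + 2) 4 : ℚ)) = (6 * (n : ℚ) ^ 4 + 32 * (n : ℚ) ^ 3 + 66 * (n : ℚ) ^ 2 + 64 * (n : ℚ) + 24) / 24 := by
  refine ⟨?_, fun n hn => ⟨ncard_intPoints_smul_nabla hn, cast_choose_combination n⟩⟩
  simpa using ncard_intPoints_smul_nabla one_pos
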